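/- Let L : ℝ^d → ℝ be continuously differentiable and such that the restriction of L to each coordinate axis i is strongly convex with parameter m > 0 (i.e., for fixed other coordinates, t ↦ L with θ_i = t satisfies (∂_i L(θ¹) - ∂_i L(θ²))(θ¹_i - θ²_i) ≥ m(θ¹_i - θ²_i)² whenever θ¹ and θ² differ only in coordinate i). Then with θ = μ + ε⊙σ, ε standard Gaussian and σ_i > 0, one has E[∂L/∂θ_i(θ) · ε_i] ≥ m σ_i > 0. -/

import Mathlib

open MeasureTheory ProbabilityTheory

open MeasureTheory ProbabilityTheory Real Filter Set

lemma aux_hF (x : ℝ) :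
    HasDerivAt (fun t : ℝ => -t * Real.exp (-(1/2) * t ^ 2))
      ((x ^ 2 - 1) * Real.exp (-(1/2) * x ^ 2)) x := by
  have h1 : HasDerivAt (fun t : ℝ => -(1/2) * t ^ 2) (-(1/2) * (2 * x ^ 1)) x :=
    (hasDerivAt_pow 2 x).const_mul _
  have h2 := h1.exp
  have h3 := ((hasDerivAt_id x).neg).mul h2
  simp only [Pi.mul_def, Pi.neg_apply, id_eq] at h3 ⊢
  refine h3.congr_deriv ?_
  ring

lemma aux_int2 : Integrable (fun x : ℝ => x ^ 2 * Real.exp (-(1/2) * x ^ 2)) := by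
  have h := integrable_rpow_mul_exp_neg_mul_sq (b := 1/2) (by norm_num) (s := 2) (by norm_num)
  simp_rw [show ((2:ℝ)) = ((2:ℕ):ℝ) by norm_num, Real.rpow_natCast] at h
  exact h

lemma aux_inte : Integrable (fun x : ℝ => Real.exp (-(1/2) * x ^ 2)) :=
  integrable_exp_neg_mul_sq (by norm_num)

lemma aux_intf' : Integrable (fun x : ℝ => (x ^ 2 - 1) * Real.exp (-(1/2) * x ^ 2)) := by
  refine (aux_int2.sub aux_inte).congr (Filter.Eventually.of_forall fun x => ?_)
  simp only [Pi.sub_apply]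
  ring

lemma aux_tendsto_top :
    Tendsto (fun x : ℝ => x * Real.exp (-(1/2) * x ^ 2)) atTop (nhds 0) := by
  have ho := rpow_mul_exp_neg_mul_sq_isLittleO_exp_neg (b := 1/2) (by norm_num) 1
  have hlim : Tendsto (fun x : ℝ => Real.exp (-(1/2) * x)) atTop (nhds 0) := by
    apply Real.tendsto_exp_atBot.comp
    exact (tendsto_const_mul_atBot_of_neg (by norm_num)).mpr tendsto_id
  have := ho.trans_tendsto hlim
  simpa [Real.rpow_one] using this

lemma aux_sq_exp_integral :
    ∫ x : ℝ, x ^ 2 * Real.exp (-(1/2) * x ^ 2) = Real.sqrt (2 * π) := by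
  have hFtop : Tendsto (fun t : ℝ => -t * Real.exp (-(1/2) * t ^ 2)) atTop (nhds 0) := by
    simpa [neg_mul] using aux_tendsto_top.neg
  have hFbot : Tendsto (fun t : ℝ => -t * Real.exp (-(1/2) * t ^ 2)) atBot (nhds 0) := by
    refine (aux_tendsto_top.comp tendsto_neg_atBot_atTop).congr fun x => ?_
    simp only [Function.comp_apply, neg_sq, neg_mul]
  have hIoi : ∫ x in Ioi (0:ℝ), (x ^ 2 - 1) * Real.exp (-(1/2) * x ^ 2) = 0 := by
    have := integral_Ioi_of_hasDerivAt_of_tendsto' (a := 0)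
      (fun x _ => aux_hF x) aux_intf'.integrableOn hFtop
    simpa using this
  have hIic : ∫ x in Iic (0:ℝ), (x ^ 2 - 1) * Real.exp (-(1/2) * x ^ 2) = 0 := by
    have := integral_Iic_of_hasDerivAt_of_tendsto' (a := 0)
      (fun x _ => aux_hF x) aux_intf'.integrableOn hFbot
    simpa using this
  have hsplit : ∫ x : ℝ, (x ^ 2 - 1) * Real.exp (-(1/2) * x ^ 2) = 0 := by
    rw [← intervalIntegral.integral_Iic_add_Ioi aux_intf'.integrableOn aux_intf'.integrableOn, hIic, hIoi]
    norm_num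
  have hgauss : ∫ x : ℝ, Real.exp (-(1/2) * x ^ 2) = Real.sqrt (2 * π) := by
    have := integral_gaussian (1/2)
    rw [this]
    congr 1
    field_simp
  have : ∫ x : ℝ, x ^ 2 * Real.exp (-(1/2) * x ^ 2)
      = (∫ x : ℝ, (x ^ 2 - 1) * Real.exp (-(1/2) * x ^ 2))
        + ∫ x : ℝ, Real.exp (-(1/2) * x ^ 2) := by
    rw [← integral_add aux_intf' aux_inte]
    congr 1; funext x; ring
  rw [this, hsplit, hgauss, zero_add]



lemma aux_pdf_eq (x : ℝ) :
    gaussianPDFReal 0 1 x = (Real.sqrt (2 * π))⁻¹ * Real.exp (-(1/2) * x ^ 2) := by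
  simp only [gaussianPDFReal, NNReal.coe_one, mul_one, sub_zero]
  congr 1
  ring

lemma aux_sq_integrable_gauss : Integrable (fun x : ℝ => x ^ 2) (gaussianReal 0 1) := by
  rw [gaussianReal_of_var_ne_zero 0 one_ne_zero,
    integrable_withDensity_iff (measurable_gaussianPDF 0 1)
      (ae_of_all _ fun x => ENNReal.ofReal_lt_top)]
  refine (aux_int2.const_mul ((Real.sqrt (2 * π))⁻¹)).congr
    (Filter.Eventually.of_forall fun x => ?_)
  simp only [gaussianPDF_def]
  rw [ENNReal.toReal_ofReal (gaussianPDFReal_nonneg _ _ _), aux_pdf_eq]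
  ring

lemma aux_sq_integral_gauss : ∫ x : ℝ, x ^ 2 ∂(gaussianReal 0 1) = 1 := by
  rw [gaussianReal_of_var_ne_zero 0 one_ne_zero]
  have hpdf : gaussianPDF 0 1
      = fun x => ((Real.toNNReal (gaussianPDFReal 0 1 x) : NNReal) : ENNReal) := rfl
  rw [hpdf, integral_withDensity_eq_integral_smul
    ((measurable_gaussianPDFReal 0 1).real_toNNReal)]
  have heq : (fun x : ℝ => Real.toNNReal (gaussianPDFReal 0 1 x) • x ^ 2)
      = fun x : ℝ => (Real.sqrt (2 * π))⁻¹ * (x ^ 2 * Real.exp (-(1/2) * x ^ 2)) := by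
    funext x
    rw [NNReal.smul_def, Real.coe_toNNReal _ (gaussianPDFReal_nonneg 0 1 x), aux_pdf_eq]
    simp only [smul_eq_mul]
    ring
  rw [heq, integral_const_mul, aux_sq_exp_integral,
    inv_mul_cancel₀ (by positivity : (0:ℝ) < Real.sqrt (2 * π)).ne']

lemma aux_map_neg : (gaussianReal 0 1).map (fun x : ℝ => -x) = gaussianReal 0 1 := by
  have h := gaussianReal_map_const_mul (μ := 0) (v := 1) (-1)
  simp only [mul_zero, neg_mul, one_mul, neg_zero] at h
  have h2 : (⟨(-1:ℝ)^2, sq_nonneg _⟩ : NNReal) * 1 = 1 := by ext; norm_num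
  convert h using 2
  exact h2.symm

lemma aux_eval (d : ℕ) (i : Fin d) :
    MeasurePreserving (fun ε : Fin d → ℝ => ε i)
      (Measure.pi fun _ : Fin d => gaussianReal 0 1) (gaussianReal 0 1) := by
  refine ⟨measurable_pi_apply i, ?_⟩
  refine Measure.ext fun s hs => ?_
  rw [Measure.map_apply (measurable_pi_apply i) hs]
  have : (fun ε : Fin d → ℝ => ε i) ⁻¹' s
      = Set.pi Set.univ (Function.update (fun _ : Fin d => Set.univ) i s) := by
    ext ε
    simp [Function.eval, Set.eval_preimage]
  rw [this, Measure.pi_pi]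
  rw [Finset.prod_eq_single i (fun j _ hj => by simp [Function.update_of_ne hj])
    (fun h => absurd (Finset.mem_univ i) h)]
  simp



/-- Generalization of Theorem 1: if the restriction of `L` to each coordinate axis
is `m`-strongly convex, then `E[∂L/∂θ_i (θ) · ε_i] ≥ m σ_i > 0`. -/
theorem stmt1 (d : ℕ) (L : (Fin d → ℝ) → ℝ) (m : ℝ) (hm : 0 < m)
    (hL : ContDiff ℝ 1 L)
    (hconv : ∀ (k : Fin d) (x y : Fin d → ℝ), (∀ j ≠ k, x j = y j) →
      (fderiv ℝ L x (Pi.single k 1) - fderiv ℝ L y (Pi.single k 1)) * (x k - y k)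
        ≥ m * (x k - y k) ^ 2)
    (i : Fin d) (μ σ : Fin d → ℝ) (hσ : 0 < σ i)
    (hint : Integrable
      (fun ε : Fin d → ℝ =>
        fderiv ℝ L (fun j => μ j + ε j * σ j) (Pi.single i 1) * ε i)
      (Measure.pi fun _ : Fin d => gaussianReal 0 1)) :
    (∫ ε : Fin d → ℝ,
        fderiv ℝ L (fun j => μ j + ε j * σ j) (Pi.single i 1) * ε i
        ∂(Measure.pi fun _ : Fin d => gaussianReal 0 1)) ≥ m * σ i
      ∧ 0 < m * σ i := by
  classical
  set π' : Measure (Fin d → ℝ) := Measure.pi fun _ : Fin d => gaussianReal 0 1 with hπ'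
  set F : (Fin d → ℝ) → ℝ := fun ε : Fin d → ℝ =>
    fderiv ℝ L (fun j => μ j + ε j * σ j) (Pi.single i 1) * ε i with hF
  refine ⟨?_, mul_pos hm hσ⟩
  set T : (Fin d → ℝ) → (Fin d → ℝ) := fun ε j => if j = i then -(ε j) else ε j with hT
  have hTmp : MeasurePreserving T π' π' := by
    exact measurePreserving_pi (fun _ : Fin d => gaussianReal 0 1)
      (fun _ : Fin d => gaussianReal 0 1)
      (f := fun j (x : ℝ) => if j = i then -x else x)
      (fun j => by
        by_cases h : j = i
        · simp only [h, if_pos rfl]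
          exact ⟨measurable_neg, aux_map_neg⟩
        · simp only [if_neg h]
          exact MeasurePreserving.id _)
  have hFcont : Continuous F := by
    have h1 : Continuous fun ε : Fin d → ℝ => (fun j => μ j + ε j * σ j) :=
      continuous_pi fun j => continuous_const.add ((continuous_apply j).mul continuous_const)
    exact (((hL.continuous_fderiv one_ne_zero).comp h1).clm_apply continuous_const).mul
      (continuous_apply i)
  have hintT : Integrable (F ∘ T) π' :=
    (hTmp.integrable_comp hFcont.aestronglyMeasurable).mpr hint
  have hIT : ∫ ε, F (T ε) ∂π' = ∫ ε, F ε ∂π' := by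
    calc ∫ ε, F (T ε) ∂π' = ∫ x, F x ∂(π'.map T) :=
          (integral_map hTmp.measurable.aemeasurable hFcont.aestronglyMeasurable).symm
      _ = ∫ x, F x ∂π' := by rw [hTmp.map_eq]
  have hev := aux_eval d i
  have hsqπ : Integrable (fun ε : Fin d → ℝ => (ε i) ^ 2) π' :=
    (hev.integrable_comp (continuous_pow 2).aestronglyMeasurable).mpr aux_sq_integrable_gauss
  have hsqval : ∫ ε : Fin d → ℝ, (ε i) ^ 2 ∂π' = 1 := by
    have h := integral_map (φ := fun ε : Fin d → ℝ => ε i) (μ := π')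
      hev.measurable.aemeasurable
      (f := fun x : ℝ => x ^ 2) ((continuous_pow 2).aestronglyMeasurable)
    rw [hev.map_eq] at h
    rw [← h, aux_sq_integral_gauss]
  have hTi : ∀ ε : Fin d → ℝ, T ε i = -(ε i) := by
    intro ε; simp [hT]
  have hpt : ∀ ε : Fin d → ℝ, 2 * m * σ i * (ε i) ^ 2 ≤ F ε + F (T ε) := by
    intro ε
    have hx : ∀ j ≠ i, (fun j => μ j + ε j * σ j) j = (fun j => μ j + T ε j * σ j) j := by
      intro j hj
      simp [hT, hj]
    have h := hconv i (fun j => μ j + ε j * σ j) (fun j => μ j + T ε j * σ j) hx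
    simp only [hTi] at h
    simp only [hF, hTi]
    nlinarith [h, hσ, hm, sq_nonneg (ε i)]
  have hintT' : Integrable (fun ε => F (T ε)) π' := hintT
  have hmono : ∫ ε, (2 * m * σ i * (ε i) ^ 2) ∂π' ≤ ∫ ε, (F ε + F (T ε)) ∂π' :=
    integral_mono (hsqπ.const_mul _) (hint.add hintT') hpt
  rw [integral_const_mul, hsqval, mul_one, integral_add hint hintT', hIT] at hmono
  linarith
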